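/- Let I_0, I_1, ..., I_m be intervals on the real line satisfying I_k ∩ int(conv(I_0 ∪ ... ∪ I_{k−1})) = ∅ for k = 1, 2, ..., m, and let P be a real polynomial of degree ≥ m. Then for every closed subinterval J of int(I_0): N(P;J) + N°(P; I_0∖J) + Σ_{i=1}^m N°(P^{(i)}; I_i) ≤ deg P; in particular (taking J = ∅), Σ_{i=0}^m N°(P^{(i)}; I_i) ≤ deg P. -/

import Mathlib

open Polynomial

-- `NZ P A`: number of zeros of `P` in `A`, counted with multiplicity.
open Classical in
noncomputable def NZ (P : Polynomial ℝ) (A : Set ℝ) : ℕ :=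
  Multiset.card (P.roots.filter (· ∈ A))

-- `ND P A`: number of distinct zeros of `P` in `A` (without multiplicities).
open Classical in
noncomputable def ND (P : Polynomial ℝ) (A : Set ℝ) : ℕ :=
  (P.roots.toFinset.filter (· ∈ A)).card

/-
Rolle's theorem bounds the roots of `P` in an interval `S`, counted with multiplicity in the
interior of `S` and once at its endpoints (`mixedRootCount P S`), by one more than the roots of
`P'` in the interior of `S`: an interior root of order `r` is a root of order `r - 1` of `P'`, and
between two consecutive roots lies another root of `P'`. Since `I (k + 1)` misses the interior of
the convex hull `H k` of `I 0, …, I k`, the roots of `P^(k+1)` in the interior of `H k` together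
with its distinct roots in `I (k + 1)` are counted by `mixedRootCount P^(k+1) (H (k + 1))`. So
each derivative loses at most one root, and `mixedRootCount P^(m) (H m) ≤ deg P - m`.
-/

def partialHull (I : ℕ → Set ℝ) (k : ℕ) : Set ℝ :=
  convexHull ℝ (⋃ i ∈ Finset.range (k + 1), I i)

theorem subset_partialHull (I : ℕ → Set ℝ) (k : ℕ) : I k ⊆ partialHull I k :=
  (subset_convexHull ℝ _).trans' (Finset.subset_set_biUnion_of_mem (Finset.self_mem_range_succ k))

theorem partialHull_mono (I : ℕ → Set ℝ) {k l : ℕ} (h : k ≤ l) :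
    partialHull I k ⊆ partialHull I l :=
  convexHull_mono (Set.biUnion_mono (Finset.range_subset_range.2 (by omega)) fun _ _ => subset_rfl)

section RootCounts

variable (P : ℝ[X])

open Classical in
theorem NZ_eq_sum_rootMultiplicity (A : Set ℝ) :
    NZ P A = ∑ x ∈ P.roots.toFinset.filter (· ∈ A), P.rootMultiplicity x := by
  rw [NZ, ← Multiset.sum_count_eq_card (s := P.roots.toFinset.filter (· ∈ A))]
  · refine Finset.sum_congr rfl fun x hx => ?_
    rw [Multiset.count_filter_of_pos (Finset.mem_filter.1 hx).2, count_roots]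
  · intro x hx
    rw [Multiset.mem_filter] at hx
    simpa using hx

theorem NZ_union_of_disjoint {A B : Set ℝ} (h : Disjoint A B) :
    NZ P (A ∪ B) = NZ P A + NZ P B := by
  classical
  have hsplit := Multiset.filter_add_filter (· ∈ A) (· ∈ B) P.roots
  rw [(Multiset.filter_eq_nil (p := fun x => x ∈ A ∧ x ∈ B)).2
    fun x _ hx => h.notMem_of_mem_left hx.1 hx.2, add_zero] at hsplit
  rw [NZ, NZ, NZ, ← Multiset.card_add, hsplit]
  congr!

theorem ND_mono {A B : Set ℝ} (h : A ⊆ B) : ND P A ≤ ND P B := by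
  classical
  exact Finset.card_le_card (Finset.monotone_filter_right _ fun _ _ hx => h hx)

theorem ND_union_le (A B : Set ℝ) : ND P (A ∪ B) ≤ ND P A + ND P B := by
  classical
  simp only [ND, Set.mem_union, Finset.filter_or]
  exact (Finset.card_union_le _ _).trans_eq (by congr!)

theorem ND_le_NZ (A : Set ℝ) : ND P A ≤ NZ P A := by
  classical
  rw [ND, NZ, ← Multiset.toFinset_filter]
  exact Multiset.toFinset_card_le _

theorem NZ_le_natDegree (A : Set ℝ) : NZ P A ≤ P.natDegree := by
  classical
  exact (Multiset.card_le_card (Multiset.filter_le _ _)).trans P.card_roots'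

noncomputable def mixedRootCount (S : Set ℝ) : ℕ :=
  NZ P (interior S) + ND P (S \ interior S)

theorem mixedRootCount_le_natDegree (S : Set ℝ) :
    mixedRootCount P S ≤ P.natDegree := by
  calc mixedRootCount P S ≤ NZ P (interior S) + NZ P (S \ interior S) :=
        Nat.add_le_add_left (ND_le_NZ P _) _
    _ = NZ P (interior S ∪ S \ interior S) :=
        (NZ_union_of_disjoint P disjoint_sdiff_self_right).symm
    _ ≤ P.natDegree := NZ_le_natDegree P _

theorem NZ_add_ND_diff_le_mixedRootCount {S J : Set ℝ} (hJ : J ⊆ interior S) :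
    NZ P J + ND P (S \ J) ≤ mixedRootCount P S := by
  have hsplit : S \ J ⊆ (interior S \ J) ∪ (S \ interior S) := fun x hx => by
    by_cases h : x ∈ interior S
    · exact Or.inl ⟨h, hx.2⟩
    · exact Or.inr ⟨hx.1, h⟩
  calc NZ P J + ND P (S \ J)
      ≤ NZ P J + (ND P (interior S \ J) + ND P (S \ interior S)) :=
        Nat.add_le_add_left ((ND_mono P hsplit).trans (ND_union_le P _ _)) _
    _ ≤ NZ P J + NZ P (interior S \ J) + ND P (S \ interior S) := by
        have := ND_le_NZ P (interior S \ J)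
        omega
    _ = mixedRootCount P S := by
        rw [← NZ_union_of_disjoint P disjoint_sdiff_self_right, Set.union_sdiff_cancel hJ,
          mixedRootCount]

open Finset in
theorem mixedRootCount_le_NZ_derivative_interior_add_one {S : Set ℝ}
    (hS : S.OrdConnected) :
    mixedRootCount P S ≤ NZ (derivative P) (interior S) + 1 := by
  classical
  rcases eq_or_ne (derivative P) 0 with hP' | hP'
  · rw [eq_C_of_derivative_eq_zero hP']
    simp [mixedRootCount, NZ, ND]
  have hP : P ≠ 0 := ne_of_apply_ne derivative (by rwa [derivative_zero])
  set R := P.roots.toFinset.filter (· ∈ S)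
  set Rint := P.roots.toFinset.filter (· ∈ interior S)
  set T := (derivative P).roots.toFinset.filter (· ∈ interior S)
  have hRolle : #R ≤ #(T \ R) + 1 := by
    refine card_le_sdiff_of_interleaved fun x hx y hy hxy _ => ?_
    simp only [R, mem_filter, Multiset.mem_toFinset, mem_roots hP] at hx hy
    obtain ⟨z, hz, hz'⟩ := exists_deriv_eq_zero hxy P.continuousOn (hx.1.trans hy.1.symm)
    have hIoo : Set.Ioo x y ⊆ interior S :=
      interior_maximal (Set.Ioo_subset_Icc_self.trans (hS.out hx.2 hy.2)) isOpen_Ioo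
    refine ⟨z, ?_, hz⟩
    rw [mem_filter, Multiset.mem_toFinset, mem_roots hP', IsRoot, ← P.deriv]
    exact ⟨hz', hIoo hz⟩
  have hR : #R = #Rint + ND P (S \ interior S) := by
    rw [ND, ← card_filter_add_card_filter_not (s := R) (· ∈ interior S)]
    congr 2 <;> ext x <;> simp only [R, Rint, mem_filter, Set.mem_sdiff, and_assoc]
    exact and_congr_right fun _ => and_iff_right_of_imp fun hx => interior_subset hx
  have hmult : ∀ x ∈ Rint, 1 ≤ P.rootMultiplicity x := fun x hx => by
    simp only [Rint, mem_filter, Multiset.mem_toFinset] at hx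
    exact (rootMultiplicity_pos hP).2 ((mem_roots hP).1 hx.1)
  calc mixedRootCount P S = ∑ x ∈ Rint, (P.rootMultiplicity x - 1) + #R := by
        rw [hR, mixedRootCount, NZ_eq_sum_rootMultiplicity, card_eq_sum_ones Rint, ← add_assoc,
          ← sum_add_distrib]
        congr 1
        exact sum_congr rfl fun x hx => (Nat.sub_add_cancel (hmult x hx)).symm
    _ ≤ ∑ x ∈ Rint, (derivative P).rootMultiplicity x + (#(T \ R) + 1) := by
        gcongr with x
        exact rootMultiplicity_sub_one_le_derivative_rootMultiplicity P x
    _ ≤ ∑ x ∈ Rint ∪ T \ R, (derivative P).rootMultiplicity x + 1 := by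
        have hRintR : Rint ⊆ R := monotone_filter_right _ fun _ _ hx => interior_subset hx
        rw [sum_union (disjoint_sdiff.mono_left hRintR), card_eq_sum_ones, add_assoc]
        gcongr with x hx
        simp only [T, mem_sdiff, mem_filter, Multiset.mem_toFinset] at hx
        exact (rootMultiplicity_pos hP').2 ((mem_roots hP').1 hx.1.1)
    _ ≤ ∑ x ∈ T, (derivative P).rootMultiplicity x + 1 := by
        gcongr 1
        refine sum_le_sum_of_ne_zero fun x hx hx0 => ?_
        simp only [T, mem_filter, Multiset.mem_toFinset, mem_roots hP']
        refine ⟨(rootMultiplicity_pos hP').1 (Nat.pos_of_ne_zero hx0), ?_⟩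
        rcases mem_union.1 hx with hx | hx
        · exact (mem_filter.1 hx).2
        · exact (mem_filter.1 (mem_sdiff.1 hx).1).2
    _ = NZ (derivative P) (interior S) + 1 := by rw [NZ_eq_sum_rootMultiplicity]

theorem mixedRootCount_add_ND_derivative_le {S T I : Set ℝ} (hS : S.OrdConnected)
    (hST : S ⊆ T) (hIT : I ⊆ T) (hI : Disjoint I (interior S)) :
    mixedRootCount P S + ND (derivative P) I ≤ mixedRootCount (derivative P) T + 1 := by
  have hI' : I ⊆ T \ interior S := fun x hx => ⟨hIT hx, hI.notMem_of_mem_left hx⟩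
  calc mixedRootCount P S + ND (derivative P) I
      ≤ NZ (derivative P) (interior S) + ND (derivative P) (T \ interior S) + 1 := by
        have := mixedRootCount_le_NZ_derivative_interior_add_one P hS
        have := ND_mono (derivative P) hI'
        omega
    _ ≤ mixedRootCount (derivative P) T + 1 :=
        Nat.add_le_add_right (NZ_add_ND_diff_le_mixedRootCount _ (interior_mono hST)) _

theorem NZ_add_ND_add_sum_ND_iterate_derivative_le (I : ℕ → Set ℝ)
    (hI₀ : (I 0).OrdConnected) {J : Set ℝ} (hJ : J ⊆ interior (I 0)) (n : ℕ)
    (hdisj : ∀ k < n, Disjoint (I (k + 1)) (interior (partialHull I k))) :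
    NZ P J + ND P (I 0 \ J) + ∑ i ∈ Finset.Icc 1 n, ND (derivative^[i] P) (I i) ≤
      mixedRootCount (derivative^[n] P) (partialHull I n) + n := by
  induction n with
  | zero =>
    simpa [partialHull, hI₀.convex.convexHull_eq] using NZ_add_ND_diff_le_mixedRootCount P hJ
  | succ n ih =>
    have hstep : mixedRootCount (derivative^[n] P) (partialHull I n)
        + ND (derivative^[n + 1] P) (I (n + 1)) ≤
        mixedRootCount (derivative^[n + 1] P) (partialHull I (n + 1)) + 1 := by
      rw [Function.iterate_succ_apply']
      exact mixedRootCount_add_ND_derivative_le _ (convex_convexHull ℝ _).ordConnected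
        (partialHull_mono I n.le_succ) (subset_partialHull I (n + 1)) (hdisj n n.lt_succ_self)
    have := ih fun k hk => hdisj k (by omega)
    rw [Finset.sum_Icc_succ_top (by omega)]
    omega

end RootCounts

theorem stmt4 (m : ℕ) (I : ℕ → Set ℝ) (hI : ∀ i ≤ m, (I i).OrdConnected)
    (hseq : ∀ k, 1 ≤ k → k ≤ m →
      I k ∩ interior (convexHull ℝ (⋃ i ∈ Finset.range k, I i)) = ∅)
    (P : Polynomial ℝ) (hP : (m : WithBot ℕ) ≤ P.degree) :
    (∀ J : Set ℝ, J.OrdConnected → IsClosed J → J ⊆ interior (I 0) →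
      NZ P J + ND P (I 0 \ J) + ∑ i ∈ Finset.Icc 1 m, ND (derivative^[i] P) (I i) ≤
        P.natDegree) ∧
    ∑ i ∈ Finset.range (m + 1), ND (derivative^[i] P) (I i) ≤ P.natDegree := by
  have hm : m ≤ P.natDegree := le_natDegree_of_coe_le_degree hP
  have hbound : ∀ J, J ⊆ interior (I 0) →
      NZ P J + ND P (I 0 \ J) + ∑ i ∈ Finset.Icc 1 m, ND (derivative^[i] P) (I i) ≤
        P.natDegree := fun J hJ => by
    have := NZ_add_ND_add_sum_ND_iterate_derivative_le P I (hI 0 m.zero_le) hJ m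
      fun k hk => Set.disjoint_iff_inter_eq_empty.2 (hseq (k + 1) k.succ_pos hk)
    have := (mixedRootCount_le_natDegree _ (partialHull I m)).trans
      (natDegree_iterate_derivative P m)
    omega
  refine ⟨fun J _ _ hJ => hbound J hJ, ?_⟩
  rw [Finset.range_eq_Ico, Finset.sum_eq_sum_Ico_succ_bot m.succ_pos, zero_add,
    Nat.succ_eq_add_one, Finset.Ico_add_one_right_eq_Icc]
  simpa [NZ] using hbound ∅ (Set.empty_subset _)
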